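/- arXiv:math/0307015 — 2 statements merged into one kernel-verified Lean document; each statement's English description precedes it below -/
import Mathlib

section
/- Let H be a (not necessarily reduced) hypersurface defined in a neighborhood of 0 in ℂⁿ and containing 0, and let f : Δ → ℂⁿ be a holomorphic map from a disk with f(0) = 0 such that f*H is well-defined (f does not map Δ into H). Then mult₀(H) ≤ mult₀(f*H), and equality holds if and only if the image f₊(T₀Δ) of the tangent space is not contained in the tangent cone of H at 0. -/
/-!
Write `m = mult₀ H` and `v = f'(0)`. Taylor expansion of `g` to order `m + 1`, composed with
`f(t) = O(t)`, gives `g (f t) = t ^ m • p_m(v, …, v) + o(t ^ m)`, while `g (f t) = c t ^ k + o(t ^ k)`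
with `c ≠ 0` and `k = mult₀ (f*H)`. Comparing the two expansions forces `m ≤ k`, with `m = k` exactly
when `p_m(v, …, v) ≠ 0`; by homogeneity of `p_m` this says that the line `ℂ v` leaves the cone.
-/

open Filter Asymptotics Topology

variable {𝕜 E F : Type*} [NontriviallyNormedField 𝕜] [NormedAddCommGroup E] [NormedSpace 𝕜 E]
  [NormedAddCommGroup F] [NormedSpace 𝕜 F]

theorem ContinuousMultilinearMap.map_const_smul {m : ℕ}
    (P : ContinuousMultilinearMap 𝕜 (fun _ : Fin m => E) F) (c : 𝕜) (v : E) :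
    P (fun _ => c • v) = c ^ m • P (fun _ => v) := by
  simpa using P.map_smul_univ (fun _ => c) (fun _ => v)

theorem ContinuousMultilinearMap.exists_apply_const_smul_ne_zero_iff {m : ℕ}
    (P : ContinuousMultilinearMap 𝕜 (fun _ : Fin m => E) F) (v : E) :
    (∃ c : 𝕜, P (fun _ => c • v) ≠ 0) ↔ P (fun _ => v) ≠ 0 := by
  refine ⟨fun ⟨c, hc⟩ => ?_, fun hv => ⟨1, by simpa using hv⟩⟩
  rw [P.map_const_smul] at hc
  exact right_ne_zero_of_smul hc

theorem HasFPowerSeriesAt.isBigO_sub_apply_pow_succ {g : E → F}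
    {p : FormalMultilinearSeries 𝕜 E F} {x : E} (hg : HasFPowerSeriesAt g p x) {m : ℕ}
    (hm : ∀ i < m, p i = 0) :
    (fun y => g (x + y) - p m (fun _ => y)) =O[𝓝 0] fun y => ‖y‖ ^ (m + 1) := by
  have hsum : ∀ y, p.partialSum (m + 1) y = p m (fun _ => y) := by
    intro y
    rw [FormalMultilinearSeries.partialSum, Finset.sum_range_succ,
      Finset.sum_eq_zero fun i hi => ?_, zero_add]
    simp [hm i (Finset.mem_range.mp hi)]
  simpa only [hsum] using hg.isBigO_sub_partialSum_pow (m + 1)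

theorem HasFPowerSeriesAt.tendsto_inv_pow_smul_comp {g : E → F}
    {p : FormalMultilinearSeries 𝕜 E F} (hg : HasFPowerSeriesAt g p 0) {m : ℕ}
    (hm : ∀ i < m, p i = 0) {f : 𝕜 → E} (hf : DifferentiableAt 𝕜 f 0) (hf0 : f 0 = 0) :
    Tendsto (fun t => (t ^ m)⁻¹ • g (f t)) (𝓝[≠] 0) (𝓝 (p m fun _ => deriv f 0)) := by
  have hfO : f =O[𝓝 0] fun t => t := by
    simpa [hf0] using hf.hasFDerivAt.isBigO_sub
  have hf_tendsto : Tendsto f (𝓝 0) (𝓝 0) := hf0 ▸ hf.continuousAt.tendsto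
  have hremainder : (fun t => g (f t) - p m (fun _ => f t)) =o[𝓝 0] fun t => t ^ m := by
    have htaylor := (hg.isBigO_sub_apply_pow_succ hm).comp_tendsto hf_tendsto
    simp only [Function.comp_def, zero_add] at htaylor
    refine (htaylor.trans (hfO.norm_norm.pow (m + 1))).trans_isLittleO ?_
    simpa only [norm_pow] using (isLittleO_pow_pow (𝕜 := 𝕜) (lt_add_one m)).norm_left
  have hslope : Tendsto (fun t => t⁻¹ • f t) (𝓝[≠] 0) (𝓝 (deriv f 0)) := by
    simpa [slope_fun_def, hf0] using hasDerivAt_iff_tendsto_slope.mp hf.hasDerivAt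
  have hmain : Tendsto (fun t => p m (fun _ => t⁻¹ • f t)) (𝓝[≠] 0)
      (𝓝 (p m fun _ => deriv f 0)) :=
    ((p m).cont.comp (continuous_pi fun _ => continuous_id)).continuousAt.tendsto.comp hslope
  have hsum := hmain.add (hremainder.tendsto_inv_smul_nhds_zero.mono_left nhdsWithin_le_nhds)
  rw [add_zero] at hsum
  refine hsum.congr' (eventually_nhdsWithin_of_forall fun t ht => ?_)
  rw [(p m).map_const_smul, smul_sub, inv_pow, add_sub_cancel]

theorem Filter.Tendsto.inv_pow_smul_of_lt {u : 𝕜 → F} {a b : ℕ} {B : F}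
    (hu : Tendsto (fun t => (t ^ b)⁻¹ • u t) (𝓝[≠] 0) (𝓝 B)) (hab : a < b) :
    Tendsto (fun t => (t ^ a)⁻¹ • u t) (𝓝[≠] 0) (𝓝 0) := by
  have hpow : Tendsto (fun t : 𝕜 => t ^ (b - a)) (𝓝[≠] 0) (𝓝 0) := by
    simpa [zero_pow (Nat.sub_ne_zero_of_lt hab)] using
      ((continuous_pow (b - a)).tendsto (0 : 𝕜)).mono_left nhdsWithin_le_nhds
  refine (zero_smul 𝕜 B ▸ hpow.smul hu).congr' (eventually_nhdsWithin_of_forall fun t ht => ?_)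
  rw [smul_smul, ← pow_sub_mul_pow t hab.le, mul_inv, ← mul_assoc,
    mul_inv_cancel₀ (pow_ne_zero _ ht), one_mul]

theorem mult_le_mult_pullback_and_eq_iff_tangent_general
    (n : ℕ) (g : (Fin n → ℂ) → ℂ) (p : FormalMultilinearSeries ℂ (Fin n → ℂ) ℂ)
    (hg : HasFPowerSeriesAt g p 0)
    (f : ℂ → (Fin n → ℂ)) (hf : AnalyticAt ℂ f 0) (hf0 : f 0 = 0)
    (q : FormalMultilinearSeries ℂ ℂ ℂ)
    (hq : HasFPowerSeriesAt (g ∘ f) q 0) (hq0 : q ≠ 0) :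
    p.order ≤ q.order ∧
      (p.order = q.order ↔
        ∃ c : ℂ, p p.order (fun _ => c • deriv f 0) ≠ 0) := by
  have hg_lim := hg.tendsto_inv_pow_smul_comp (fun _ => p.apply_eq_zero_of_lt_order)
    hf.differentiableAt hf0
  have hq_lim : Tendsto (fun t => (t ^ q.order)⁻¹ • g (f t)) (𝓝[≠] 0) (𝓝 (q.coeff q.order)) := by
    simpa using hq.tendsto_inv_pow_smul_comp (fun _ => q.apply_eq_zero_of_lt_order)
      differentiableAt_id rfl
  have hcoeff : q.coeff q.order ≠ 0 :=
    FormalMultilinearSeries.coeff_eq_zero.not.mpr (q.apply_order_ne_zero hq0)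
  have hle : p.order ≤ q.order := by
    by_contra! hlt
    exact hcoeff (tendsto_nhds_unique hq_lim (hg_lim.inv_pow_smul_of_lt hlt))
  rw [(p p.order).exists_apply_const_smul_ne_zero_iff]
  refine ⟨hle, fun heq => ?_, fun hne => ?_⟩
  · rw [← heq] at hq_lim hcoeff
    exact tendsto_nhds_unique hq_lim hg_lim ▸ hcoeff
  · by_contra hneq
    exact hne (tendsto_nhds_unique hg_lim (hq_lim.inv_pow_smul_of_lt (hle.lt_of_ne hneq)))

theorem mult_le_mult_pullback_and_eq_iff_tangent
    (n : ℕ) (g : (Fin n → ℂ) → ℂ) (p : FormalMultilinearSeries ℂ (Fin n → ℂ) ℂ)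
    (hg : HasFPowerSeriesAt g p 0) (hg0 : g 0 = 0) (hp : p ≠ 0)
    (f : ℂ → (Fin n → ℂ)) (hf : AnalyticAt ℂ f 0) (hf0 : f 0 = 0)
    (q : FormalMultilinearSeries ℂ ℂ ℂ)
    (hq : HasFPowerSeriesAt (g ∘ f) q 0) (hq0 : q ≠ 0) :
    p.order ≤ q.order ∧
      (p.order = q.order ↔
        ∃ c : ℂ, p p.order (fun _ => c • deriv f 0) ≠ 0) :=
  mult_le_mult_pullback_and_eq_iff_tangent_general n g p hg f hf hf0 q hq hq0
end

section
/- With R = ℂ[[x,y]]/(xy) ⊆ S = ℂ[[u,v]]/(uv) (x = u², y = v²) and τ(u) = −u, τ(v) = −v, let X ⊆ Frac-type module ℂ[[u]]·(1/u) ⊕ ℂ[[v]]·(1/v) be the S-submodule X = { aα + g₁ + g₂ : g₁ ∈ ℂ[[u]], g₂ ∈ ℂ[[v]], a ∈ ℂ } where α = 1/u + c/v for a fixed c ∈ ℂ*. Then as an R-module with the induced τ-action, X = X₊ ⊕ X₋ with the invariant part X₊ = ℂ[[x]] ⊕ ℂ[[y]] isomorphic to the normalization R̃ of R, and the anti-invariant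 part X₋ = ℂ·α ⊕ u·ℂ[[x]] ⊕ v·ℂ[[y]] isomorphic to R as an R-module. -/
open PowerSeries

/-- `f` is an even power series (a power series in `z²`). -/
def IsEvenPS (f : PowerSeries ℂ) : Prop := ∀ n : ℕ, Odd n → coeff n f = 0

/-- `f` is an odd power series (`z` times a power series in `z²`). -/
def IsOddPS (f : PowerSeries ℂ) : Prop := ∀ n : ℕ, Even n → coeff n f = 0

/-- The nodal ring `R = ℂ⟦x,y⟧/(xy)`, realized as the subring of pairs
`(F(x), G(y)) ∈ ℂ⟦x⟧ × ℂ⟦y⟧` with `F(0) = G(0)`. -/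
noncomputable def NodalRing : Subring (PowerSeries ℂ × PowerSeries ℂ) where
  carrier := {p | constantCoeff p.1 = constantCoeff p.2}
  mul_mem' := by
    intro a b ha hb
    simp only [Set.mem_setOf_eq, Prod.fst_mul, Prod.snd_mul, map_mul] at *
    rw [ha, hb]
  one_mem' := by simp [Set.mem_setOf_eq]
  add_mem' := by
    intro a b ha hb
    simp only [Set.mem_setOf_eq, Prod.fst_add, Prod.snd_add, map_add] at *
    rw [ha, hb]
  zero_mem' := by simp [Set.mem_setOf_eq]
  neg_mem' := by
    intro a ha
    simp only [Set.mem_setOf_eq, Prod.fst_neg, Prod.snd_neg, map_neg] at *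
    rw [ha]

/-- Substitution `X ↦ X²`: the image of `F(x) ∈ ℂ⟦x⟧` under `x = u²`. -/
noncomputable def sqSubst (f : PowerSeries ℂ) : PowerSeries ℂ :=
  PowerSeries.mk fun n => if n % 2 = 0 then coeff (n / 2) f else 0

/-- `(f − f(0))/X`. -/
noncomputable def shiftDown (f : PowerSeries ℂ) : PowerSeries ℂ :=
  PowerSeries.mk fun n => coeff (n + 1) f

/-- The module `X`: `(a, g₁, g₂)` represents `a·α + g₁(u) + g₂(v)` with
`α = 1/u + c/v`, inside `ℂ⟦u⟧·(1/u) ⊕ ℂ⟦v⟧·(1/v)`. The involution `τ` (`u ↦ −u`,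
`v ↦ −v`) acts by `α ↦ −α` and by `rescale (−1)` on `g₁, g₂`. -/
noncomputable def tauX (x : ℂ × PowerSeries ℂ × PowerSeries ℂ) :
    ℂ × PowerSeries ℂ × PowerSeries ℂ :=
  (-x.1, rescale (-1 : ℂ) x.2.1, rescale (-1 : ℂ) x.2.2)

/-- The `R = NodalRing`-module structure on `X`: `(F,G) • (a·α + g₁ + g₂)` is computed
from `F(u²)·(a/u + g₁(u))` on the `u`-branch and `G(v²)·(ca/v + g₂(v))` on the
`v`-branch, using `F(u²)/u = F(0)/u + u·((F(u²) − F(0))/u²)`. -/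
noncomputable def smulX (c : ℂ) (r : NodalRing) (x : ℂ × PowerSeries ℂ × PowerSeries ℂ) :
    ℂ × PowerSeries ℂ × PowerSeries ℂ :=
  (constantCoeff (r : PowerSeries ℂ × PowerSeries ℂ).1 * x.1,
   sqSubst (r : PowerSeries ℂ × PowerSeries ℂ).1 * x.2.1 +
     x.1 • shiftDown (sqSubst (r : PowerSeries ℂ × PowerSeries ℂ).1),
   sqSubst (r : PowerSeries ℂ × PowerSeries ℂ).2 * x.2.2 +
     (c * x.1) • shiftDown (sqSubst (r : PowerSeries ℂ × PowerSeries ℂ).2))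


/-!
`τ` is an additive involution, so `x = (x + τx)/2 + (x - τx)/2` is the unique splitting into
`±1`-eigenvectors. In coordinates `(a, g₁, g₂)`, `τ` negates `a` and substitutes `u ↦ -u`,
`v ↦ -v`, so the eigenspaces are read off from the parity of `g₁, g₂`. Even series are exactly
the `F(u²)`, which gives `X₊ ≅ ℂ⟦x⟧ × ℂ⟦y⟧`. On `X₋` every element is `r·α` for a unique `r`:
from `(a, g₁, g₂)` with `g₁, g₂` odd, take `F(u²) = a + u·g₁` and `G(v²) = a + v·g₂/c`; then
`F(0) = G(0) = a` puts `(F, G)` in `R`.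
-/
theorem existsUnique_eq_add_of_involutive {K M : Type*} [DivisionRing K] [NeZero (2 : K)]
    [AddCommGroup M] [Module K M] (τ : M →+ M) (hτ : Function.Involutive τ) (x : M) :
    ∃! q : M × M, x = q.1 + q.2 ∧ τ q.1 = q.1 ∧ τ q.2 = -q.2 := by
  have half_smul : ∀ y : M, τ ((2⁻¹ : K) • y) = (2⁻¹ : K) • τ y := by
    simpa using map_inv_natCast_smul τ K K 2
  have two_smul_half : ∀ y : M, (2⁻¹ : K) • (y + y) = y := by
    intro y
    rw [← two_smul K, smul_smul, inv_mul_cancel₀ two_ne_zero, one_smul]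
  refine ⟨((2⁻¹ : K) • (x + τ x), (2⁻¹ : K) • (x - τ x)), ⟨?_, ?_, ?_⟩, ?_⟩
  · rw [← smul_add, add_add_sub_cancel, two_smul_half]
  · rw [half_smul, map_add, hτ, add_comm]
  · rw [half_smul, map_sub, hτ, ← smul_neg, neg_sub]
  · rintro ⟨p, m⟩ ⟨rfl, hp, hm⟩
    have hτx : τ (p + m) = p - m := by rw [map_add, hp, hm, sub_eq_add_neg]
    have hsum : p + m + τ (p + m) = p + p := by rw [hτx]; abel
    have hdiff : p + m - τ (p + m) = m + m := by rw [hτx]; abel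
    simp only [hsum, hdiff, two_smul_half]

theorem rescale_neg_one_eq_self_iff (f : PowerSeries ℂ) :
    rescale (-1 : ℂ) f = f ↔ IsEvenPS f := by
  simp only [IsEvenPS, PowerSeries.ext_iff, coeff_rescale]
  refine forall_congr' fun n => ?_
  rcases Nat.even_or_odd n with hn | hn
  · simp [hn.neg_one_pow, Nat.not_odd_iff_even.2 hn]
  · simp [hn.neg_one_pow, hn, neg_eq_self]
  
theorem rescale_neg_one_eq_neg_iff (f : PowerSeries ℂ) :
    rescale (-1 : ℂ) f = -f ↔ IsOddPS f := by
  simp only [IsOddPS, PowerSeries.ext_iff, coeff_rescale, map_neg]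
  refine forall_congr' fun n => ?_
  rcases Nat.even_or_odd n with hn | hn
  · simp [hn.neg_one_pow, hn, self_eq_neg]
  · simp [hn.neg_one_pow, Nat.not_even_iff_odd.2 hn]

theorem IsOddPS.smul {f : PowerSeries ℂ} (hf : IsOddPS f) (a : ℂ) : IsOddPS (a • f) := by
  intro n hn
  rw [coeff_smul, hf n hn, smul_zero]

theorem isEvenPS_X_mul_add_C {g : PowerSeries ℂ} (hg : IsOddPS g) (a : ℂ) :
    IsEvenPS (X * g + C a) := by
  rintro _ ⟨n, rfl⟩
  rw [map_add, coeff_succ_X_mul, coeff_succ_C, hg _ (even_two_mul n), add_zero]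

theorem tauX_eq_self_iff (x : ℂ × PowerSeries ℂ × PowerSeries ℂ) :
    tauX x = x ↔ x.1 = 0 ∧ IsEvenPS x.2.1 ∧ IsEvenPS x.2.2 := by
  simp only [tauX, Prod.ext_iff, neg_eq_self, rescale_neg_one_eq_self_iff]

theorem tauX_eq_neg_iff (x : ℂ × PowerSeries ℂ × PowerSeries ℂ) :
    tauX x = -x ↔ IsOddPS x.2.1 ∧ IsOddPS x.2.2 := by
  simp only [tauX, Prod.ext_iff, Prod.fst_neg, Prod.snd_neg, rescale_neg_one_eq_neg_iff,
    true_and]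

theorem tauX_involutive : Function.Involutive tauX := by
  intro x
  simp [tauX, rescale_rescale]

noncomputable def tauXAddHom :
    (ℂ × PowerSeries ℂ × PowerSeries ℂ) →+ ℂ × PowerSeries ℂ × PowerSeries ℂ :=
  AddMonoidHom.mk' tauX fun x y => by simp [tauX, add_comm]

theorem sqSubst_eq_expand (f : PowerSeries ℂ) : sqSubst f = expand 2 two_ne_zero f := by
  ext n
  simp only [sqSubst, coeff_mk, coeff_expand, Nat.dvd_iff_mod_eq_zero]

theorem sqSubst_add (f g : PowerSeries ℂ) : sqSubst (f + g) = sqSubst f + sqSubst g := by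
  simp only [sqSubst_eq_expand, map_add]

theorem sqSubst_mul (f g : PowerSeries ℂ) : sqSubst (f * g) = sqSubst f * sqSubst g := by
  simp only [sqSubst_eq_expand, map_mul]

theorem constantCoeff_sqSubst (f : PowerSeries ℂ) :
    constantCoeff (sqSubst f) = constantCoeff f := by
  rw [sqSubst_eq_expand, constantCoeff_expand]

theorem sqSubst_injective : Function.Injective sqSubst := by
  intro f g h
  ext m
  simpa only [sqSubst_eq_expand, coeff_expand_mul] using congrArg (coeff (2 * m)) h

theorem isEvenPS_iff_exists_sqSubst_eq (g : PowerSeries ℂ) :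
    IsEvenPS g ↔ ∃ f, sqSubst f = g := by
  constructor
  · intro hg
    refine ⟨mk fun m => coeff (2 * m) g, ?_⟩
    ext n
    rw [sqSubst_eq_expand, coeff_expand]
    split_ifs with h
    · rw [coeff_mk, Nat.mul_div_cancel' h]
    · exact (hg n (Nat.odd_iff.2 (by omega))).symm
  · rintro ⟨f, rfl⟩ n hn
    rw [sqSubst_eq_expand, coeff_expand_of_not_dvd]
    simpa [← even_iff_two_dvd] using hn

theorem shiftDown_eq_of_eq_X_mul_add_C {f g : PowerSeries ℂ} {a : ℂ} (h : f = X * g + C a) :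
    shiftDown f = g := by
  ext n
  rw [shiftDown, coeff_mk, h, map_add, coeff_succ_X_mul, coeff_succ_C, add_zero]

theorem eq_X_mul_shiftDown_add_C (f : PowerSeries ℂ) :
    f = X * shiftDown f + C (constantCoeff f) :=
  eq_X_mul_shift_add_const f

theorem shiftDown_add (f g : PowerSeries ℂ) : shiftDown (f + g) = shiftDown f + shiftDown g := by
  refine shiftDown_eq_of_eq_X_mul_add_C (a := constantCoeff f + constantCoeff g) ?_
  rw [map_add]
  linear_combination eq_X_mul_shiftDown_add_C f + eq_X_mul_shiftDown_add_C g

theorem shiftDown_mul (f g : PowerSeries ℂ) :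
    shiftDown (f * g) = f * shiftDown g + constantCoeff g • shiftDown f := by
  refine shiftDown_eq_of_eq_X_mul_add_C (a := constantCoeff f * constantCoeff g) ?_
  simp only [smul_eq_C_mul, map_mul]
  linear_combination
    f * eq_X_mul_shiftDown_add_C g + C (constantCoeff g) * eq_X_mul_shiftDown_add_C f

theorem eq_of_constantCoeff_eq_of_shiftDown_eq {f g : PowerSeries ℂ}
    (h₀ : constantCoeff f = constantCoeff g) (h : shiftDown f = shiftDown g) : f = g := by
  rw [eq_X_mul_shiftDown_add_C f, eq_X_mul_shiftDown_add_C g, h₀, h]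

theorem exists_constantCoeff_eq_shiftDown_sqSubst_eq {g : PowerSeries ℂ} (hg : IsOddPS g)
    (a : ℂ) : ∃ f, constantCoeff f = a ∧ shiftDown (sqSubst f) = g := by
  obtain ⟨f, hf⟩ := (isEvenPS_iff_exists_sqSubst_eq _).1 (isEvenPS_X_mul_add_C hg a)
  refine ⟨f, ?_, shiftDown_eq_of_eq_X_mul_add_C hf⟩
  rw [← constantCoeff_sqSubst, hf]
  simp

theorem isOddPS_shiftDown_sqSubst (f : PowerSeries ℂ) : IsOddPS (shiftDown (sqSubst f)) := by
  intro n hn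
  rw [shiftDown, coeff_mk, sqSubst_eq_expand, coeff_expand_of_not_dvd]
  simpa [← even_iff_two_dvd, Nat.even_add_one] using hn

theorem constantCoeff_fst_eq_snd (r : NodalRing) :
    constantCoeff (r : PowerSeries ℂ × PowerSeries ℂ).1 =
      constantCoeff (r : PowerSeries ℂ × PowerSeries ℂ).2 :=
  r.2

section SmulX

variable (c : ℂ)

theorem add_smulX (r s : NodalRing) (x : ℂ × PowerSeries ℂ × PowerSeries ℂ) :
    smulX c (r + s) x = smulX c r x + smulX c s x := by
  simp only [smulX, Subring.coe_add, Prod.fst_add, Prod.snd_add, map_add, sqSubst_add,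
    shiftDown_add, Prod.mk_add_mk, Prod.mk.injEq]
  refine ⟨add_mul _ _ _, ?_, ?_⟩ <;> simp only [add_mul, smul_add] <;> abel

/-- Multiplying by `s = (F, G)` scales the `v`-branch pole `c·a/v` by `G(0)` but the
coefficient of `α` by `F(0)`: this is where `F(0) = G(0)` is needed. -/
theorem mul_smulX (r s : NodalRing) (x : ℂ × PowerSeries ℂ × PowerSeries ℂ) :
    smulX c (r * s) x = smulX c r (smulX c s x) := by
  simp only [smulX, Subring.coe_mul, Prod.fst_mul, Prod.snd_mul, map_mul, sqSubst_mul,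
    shiftDown_mul, constantCoeff_sqSubst, Prod.mk.injEq]
  refine ⟨mul_assoc _ _ _, ?_, ?_⟩
  · simp only [smul_eq_C_mul, map_mul]
    ring
  · simp only [← constantCoeff_fst_eq_snd s, smul_eq_C_mul, map_mul]
    ring

def alphaX : ℂ × PowerSeries ℂ × PowerSeries ℂ := (1, 0, 0)

theorem smulX_alphaX (r : NodalRing) :
    smulX c r alphaX = (constantCoeff (r : PowerSeries ℂ × PowerSeries ℂ).1,
      shiftDown (sqSubst (r : PowerSeries ℂ × PowerSeries ℂ).1),
      c • shiftDown (sqSubst (r : PowerSeries ℂ × PowerSeries ℂ).2)) := by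
  simp [smulX, alphaX]

theorem tauX_smulX_alphaX (r : NodalRing) : tauX (smulX c r alphaX) = -smulX c r alphaX := by
  rw [smulX_alphaX]
  exact (tauX_eq_neg_iff _).2 ⟨isOddPS_shiftDown_sqSubst _, (isOddPS_shiftDown_sqSubst _).smul c⟩

variable {c}

theorem smulX_alphaX_injective (hc : c ≠ 0) : Function.Injective fun r => smulX c r alphaX := by
  intro r s h
  simp only [smulX_alphaX, Prod.mk.injEq] at h
  obtain ⟨h₀, h₁, h₂⟩ := h
  have branch_eq : ∀ {f g : PowerSeries ℂ}, constantCoeff f = constantCoeff g →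
      shiftDown (sqSubst f) = shiftDown (sqSubst g) → f = g := fun h₀ h =>
    sqSubst_injective <| eq_of_constantCoeff_eq_of_shiftDown_eq
      (by rw [constantCoeff_sqSubst, constantCoeff_sqSubst, h₀]) h
  exact Subtype.ext <| Prod.ext (branch_eq h₀ h₁)
    (branch_eq (by rw [← constantCoeff_fst_eq_snd, h₀, constantCoeff_fst_eq_snd])
      (smul_right_injective _ hc h₂))

theorem exists_smulX_alphaX_eq (hc : c ≠ 0) {x : ℂ × PowerSeries ℂ × PowerSeries ℂ}
    (hx : tauX x = -x) : ∃ r : NodalRing, smulX c r alphaX = x := by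
  obtain ⟨hodd₁, hodd₂⟩ := (tauX_eq_neg_iff x).1 hx
  obtain ⟨F, hF₀, hF⟩ := exists_constantCoeff_eq_shiftDown_sqSubst_eq hodd₁ x.1
  obtain ⟨G, hG₀, hG⟩ := exists_constantCoeff_eq_shiftDown_sqSubst_eq (hodd₂.smul c⁻¹) x.1
  refine ⟨⟨(F, G), hF₀.trans hG₀.symm⟩, ?_⟩
  rw [smulX_alphaX]
  simp only [hF₀, hF, hG, smul_smul, mul_inv_cancel₀ hc, one_smul]

end SmulX

noncomputable def normalizationToX (p : PowerSeries ℂ × PowerSeries ℂ) :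
    ℂ × PowerSeries ℂ × PowerSeries ℂ :=
  (0, sqSubst p.1, sqSubst p.2)

theorem normalizationToX_add (p q : PowerSeries ℂ × PowerSeries ℂ) :
    normalizationToX (p + q) = normalizationToX p + normalizationToX q := by
  simp [normalizationToX, sqSubst_add]

theorem normalizationToX_mul (c : ℂ) (r : NodalRing) (p : PowerSeries ℂ × PowerSeries ℂ) :
    normalizationToX ((r : PowerSeries ℂ × PowerSeries ℂ) * p) =
      smulX c r (normalizationToX p) := by
  simp [normalizationToX, smulX, sqSubst_mul]

theorem tauX_normalizationToX (p : PowerSeries ℂ × PowerSeries ℂ) :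
    tauX (normalizationToX p) = normalizationToX p :=
  (tauX_eq_self_iff _).2 ⟨rfl, (isEvenPS_iff_exists_sqSubst_eq _).2 ⟨_, rfl⟩,
    (isEvenPS_iff_exists_sqSubst_eq _).2 ⟨_, rfl⟩⟩

theorem normalizationToX_injective : Function.Injective normalizationToX := by
  intro p q h
  simp only [normalizationToX, Prod.mk.injEq, true_and] at h
  exact Prod.ext (sqSubst_injective h.1) (sqSubst_injective h.2)

theorem exists_normalizationToX_eq {x : ℂ × PowerSeries ℂ × PowerSeries ℂ} (hx : tauX x = x) :
    ∃ p, normalizationToX p = x := by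
  obtain ⟨h₀, heven₁, heven₂⟩ := (tauX_eq_self_iff x).1 hx
  obtain ⟨F, hF⟩ := (isEvenPS_iff_exists_sqSubst_eq _).1 heven₁
  obtain ⟨G, hG⟩ := (isEvenPS_iff_exists_sqSubst_eq _).1 heven₂
  exact ⟨(F, G), Prod.ext h₀.symm (Prod.ext hF hG)⟩

theorem nodal_OpPlusQ_local_decomposition (c : ℂ) (hc : c ≠ 0) :
    -- (i) unique eigenspace decomposition
    (∀ x : ℂ × PowerSeries ℂ × PowerSeries ℂ,
      ∃! q : (ℂ × PowerSeries ℂ × PowerSeries ℂ) × (ℂ × PowerSeries ℂ × PowerSeries ℂ),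
        x = q.1 + q.2 ∧ tauX q.1 = q.1 ∧ tauX q.2 = -q.2) ∧
    -- (ii) the invariant part
    (∀ x : ℂ × PowerSeries ℂ × PowerSeries ℂ,
      tauX x = x ↔ (x.1 = 0 ∧ IsEvenPS x.2.1 ∧ IsEvenPS x.2.2)) ∧
    -- (iii) the anti-invariant part
    (∀ x : ℂ × PowerSeries ℂ × PowerSeries ℂ,
      tauX x = -x ↔ (IsOddPS x.2.1 ∧ IsOddPS x.2.2)) ∧
    -- (iv) `X₊ ≅ R̃ = ℂ⟦x⟧ × ℂ⟦y⟧` as `R`-modules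
    (∃ Ψ : PowerSeries ℂ × PowerSeries ℂ → ℂ × PowerSeries ℂ × PowerSeries ℂ,
      (∀ p q, Ψ (p + q) = Ψ p + Ψ q) ∧
      (∀ (r : NodalRing) (p : PowerSeries ℂ × PowerSeries ℂ),
        Ψ ((r : PowerSeries ℂ × PowerSeries ℂ) * p) = smulX c r (Ψ p)) ∧
      (∀ p, tauX (Ψ p) = Ψ p) ∧
      Function.Injective Ψ ∧
      (∀ x, tauX x = x → ∃ p, Ψ p = x)) ∧
    -- (v) `X₋ ≅ R` as `R`-modules
    (∃ Φ : NodalRing → ℂ × PowerSeries ℂ × PowerSeries ℂ,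
      (∀ r s : NodalRing, Φ (r + s) = Φ r + Φ s) ∧
      (∀ r s : NodalRing, Φ (r * s) = smulX c r (Φ s)) ∧
      (∀ r : NodalRing, tauX (Φ r) = -(Φ r)) ∧
      Function.Injective Φ ∧
      (∀ x, tauX x = -x → ∃ r, Φ r = x)) := by
  refine ⟨existsUnique_eq_add_of_involutive (K := ℂ) tauXAddHom tauX_involutive,
    tauX_eq_self_iff, tauX_eq_neg_iff, ?_, ?_⟩
  · exact ⟨normalizationToX, normalizationToX_add, normalizationToX_mul c,
      tauX_normalizationToX, normalizationToX_injective, fun _ => exists_normalizationToX_eq⟩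
  · exact ⟨fun r => smulX c r alphaX, fun r s => add_smulX c r s alphaX,
      fun r s => mul_smulX c r s alphaX, tauX_smulX_alphaX c, smulX_alphaX_injective hc,
      fun _ => exists_smulX_alphaX_eq hc⟩
end
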